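/- arXiv:2111.04763 — 2 statements merged into one kernel-verified Lean document; each statement's English description precedes it below -/
import Mathlib

section
/- Under the substitution q ↦ q^{-1}, the (x,q)-series satisfy C_m(x,q^{-1}) = C_{-m}(x,q), A_m(x,q^{-1}) = B_{-m}(x,q), and B_m(x,q^{-1}) = A_{-m}(x,q), for |q|<1 (interpreting the left sides via the convergent series for |q^{-1}|>1). -/
open Finset Filter

/-- The q-Pochhammer symbol (a;q)_k = ∏_{j=0}^{k-1}(1 - a q^j). -/
noncomputable def pochG (a q : ℂ) (k : ℕ) : ℂ := ∏ j ∈ Finset.range k, (1 - a * q ^ j)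

/-- The (x,q)-series A_m(x,q). -/
noncomputable def Aser (x q : ℂ) (m : ℤ) : ℂ :=
  ∑' k : ℕ, (-1) ^ k * q ^ ((k : ℤ) * (k + 1) / 2 + k * m) * x ^ ((k : ℤ) + m)
    / (pochG q q k * pochG (x ^ 2 * q) q k)

/-- The (x,q)-series B_m(x,q) = A_m(x^{-1},q). -/
noncomputable def Bser (x q : ℂ) (m : ℤ) : ℂ := Aser x⁻¹ q m

/-- The (x,q)-series C_m(x,q). -/
noncomputable def Cser (x q : ℂ) (m : ℤ) : ℂ :=
  ∑' k : ℕ, (-1) ^ k * q ^ ((k : ℤ) * (k + 1) / 2 + k * m)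
    / (pochG x⁻¹ q (k + 1) * pochG x q (k + 1))

/-- The Appell-Lerch type (x,q)-series LA_m(x,q). -/
noncomputable def LAser (x q : ℂ) (m : ℤ) : ℂ :=
  ∑' k : ℕ, (-1) ^ k * q ^ ((k : ℤ) * (k + 1) / 2 + k * m + k) * x ^ ((k : ℤ) + m + 1)
    / (pochG q q k * pochG (x ^ 2 * q) q k * (1 - x * q ^ k))

/-- LB_m(x,q) = LA_m(x^{-1},q). -/
noncomputable def LBser (x q : ℂ) (m : ℤ) : ℂ := LAser x⁻¹ q m


/-! The identities hold summand by summand, so no convergence is involved. Inverting the base of a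
q-Pochhammer symbol gives `(a; q⁻¹)_k = (-a)^k q^(-C(k,2)) (a⁻¹; q)_k`; in each summand the two
denominator factors contribute `q^(-2 C(k+1,2))` (times `x^(2k)` for `A`), which turns the numerator
`q^(-C(k+1,2) - k m)` into `q^(C(k+1,2) - k m)`, the numerator with `m` replaced by `-m`. -/

lemma pochG_inv_base (a q : ℂ) (ha : a ≠ 0) (hq : q ≠ 0) (k : ℕ) :
    pochG a q⁻¹ k = (-a) ^ k * (q ^ k.choose 2)⁻¹ * pochG a⁻¹ q k := by
  induction k with
  | zero => simp [pochG]
  | succ n ih =>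
    simp only [pochG, prod_range_succ] at ih ⊢
    rw [ih, Nat.choose_succ_succ', Nat.choose_one_right, pow_add, pow_succ, inv_pow]
    field_simp
    ring

lemma pochG_inv_base_mul (a b q : ℂ) (ha : a ≠ 0) (hb : b ≠ 0) (hq : q ≠ 0) (k : ℕ) :
    pochG a q⁻¹ k * pochG b q⁻¹ k =
      (a * b) ^ k * ((q ^ k.choose 2) ^ 2)⁻¹ * (pochG a⁻¹ q k * pochG b⁻¹ q k) := by
  have hsign : (a * b) ^ k = (-a) ^ k * (-b) ^ k := by rw [← mul_pow, neg_mul_neg]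
  rw [pochG_inv_base a q ha hq, pochG_inv_base b q hb hq, hsign]
  ring

lemma mul_succ_ediv_two_eq_choose (k : ℕ) :
    (k : ℤ) * (k + 1) / 2 = ((k + 1).choose 2 : ℕ) := by
  rw [Nat.choose_two_right, Nat.add_sub_cancel, Int.natCast_div]
  push_cast
  ring_nf

lemma zpow_triangle_add_mul (q : ℂ) (hq : q ≠ 0) (k : ℕ) (m : ℤ) :
    q ^ ((k : ℤ) * (k + 1) / 2 + k * m) = q ^ k.choose 2 * q ^ k * (q ^ m) ^ k := by
  rw [mul_succ_ediv_two_eq_choose, zpow_add₀ hq, mul_comm (k : ℤ), zpow_mul, zpow_natCast,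
    zpow_natCast, Nat.choose_succ_succ', Nat.choose_one_right, pow_add, mul_comm (q ^ k)]

lemma Cser_q_inv (q x : ℂ) (hq : q ≠ 0) (hx : x ≠ 0) (m : ℤ) :
    Cser x q⁻¹ m = Cser x q (-m) := by
  refine tsum_congr fun k => ?_
  rw [pochG_inv_base_mul _ _ _ (inv_ne_zero hx) hx hq, inv_inv, inv_mul_cancel₀ hx, one_pow,
    one_mul, inv_zpow, zpow_triangle_add_mul _ hq, zpow_triangle_add_mul _ hq, zpow_neg,
    Nat.choose_succ_succ', Nat.choose_one_right, mul_comm (pochG x q _), inv_pow]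
  have hqm : q ^ m ≠ 0 := zpow_ne_zero m hq
  field_simp
  ring

lemma Aser_q_inv (q x : ℂ) (hq : q ≠ 0) (hx : x ≠ 0) (m : ℤ) :
    Aser x q⁻¹ m = Bser x q (-m) := by
  refine tsum_congr fun k => ?_
  rw [pochG_inv_base_mul _ _ _ (inv_ne_zero hq) (by positivity) hq, inv_zpow,
    zpow_triangle_add_mul _ hq, zpow_triangle_add_mul _ hq, zpow_add₀ hx,
    zpow_add₀ (inv_ne_zero hx)]
  simp only [zpow_neg, zpow_natCast, inv_zpow, mul_inv, inv_inv, inv_pow, mul_pow]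
  have hqm : q ^ m ≠ 0 := zpow_ne_zero m hq
  have hxm : x ^ m ≠ 0 := zpow_ne_zero m hx
  field_simp
  ring

theorem series_q_inv_general (q x : ℂ) (hq0 : q ≠ 0) (hx0 : x ≠ 0) (m : ℤ) :
    Cser x q⁻¹ m = Cser x q (-m) ∧
    Aser x q⁻¹ m = Bser x q (-m) ∧
    Bser x q⁻¹ m = Aser x q (-m) := by
  refine ⟨Cser_q_inv q x hq0 hx0 m, Aser_q_inv q x hq0 hx0 m, ?_⟩
  rw [Bser, Aser_q_inv q x⁻¹ hq0 (inv_ne_zero hx0) m, Bser, inv_inv]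

theorem series_q_inv (q x : ℂ) (hq : ‖q‖ < 1) (hq0 : q ≠ 0) (hx0 : x ≠ 0) (m : ℤ) :
    Cser x q⁻¹ m = Cser x q (-m) ∧
    Aser x q⁻¹ m = Bser x q (-m) ∧
    Bser x q⁻¹ m = Aser x q (-m) :=
  series_q_inv_general q x hq0 hx0 m
end

section
/- Euler's identity: for |q|<1, Σ_{n=0}^∞ q^{n^2} / (q;q)_n^2 = 1/(q;q)_∞. -/
/-!
With the Gaussian binomial `[N, m]`, the finite Durfee-square identity
`∑ₘ q^(m² + a m) [N, m] / (q;q)_{m+a} = 1 / (q;q)_{N+a}` follows by induction on `N`: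
q-Pascal `[N+1, m+1] = [N, m+1] + q^(N-m) [N, m]` splits the sum for `N + 1` into the sum for `N`
plus `q^(N+a+1)` times the sum for `N` with `a + 1`.
For `a = 0` let `N → ∞`: `[N, m] → 1 / (q;q)_m`, and the terms are dominated by `C ‖q‖^m`
because `(q;q)_n` converges to a nonzero limit, so by Tannery's theorem `1 / (q;q)_N` tends
both to the series and to `1 / (q;q)_∞`.
-/

open Finset

/-- (q;q)_n = ∏_{j=1}^n (1 - q^j). -/
noncomputable def qPoch (q : ℂ) (n : ℕ) : ℂ := ∏ j ∈ Finset.range n, (1 - q ^ (j + 1))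

open Filter Topology

@[simp]
lemma qPoch_zero (q : ℂ) : qPoch q 0 = 1 :=
  prod_range_zero _

lemma qPoch_succ (q : ℂ) (n : ℕ) : qPoch q (n + 1) = qPoch q n * (1 - q ^ (n + 1)) :=
  prod_range_succ _ n

noncomputable def qBinom (q : ℂ) (N m : ℕ) : ℂ :=
  if m ≤ N then qPoch q N / (qPoch q m * qPoch q (N - m)) else 0

lemma qBinom_of_lt (q : ℂ) {N m : ℕ} (h : N < m) : qBinom q N m = 0 :=
  if_neg h.not_ge

section

variable {q : ℂ} (hpoch : ∀ n, qPoch q n ≠ 0)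
include hpoch

lemma one_sub_pow_succ_ne_zero (n : ℕ) : 1 - q ^ (n + 1) ≠ 0 :=
  right_ne_zero_of_mul (qPoch_succ q n ▸ hpoch (n + 1))

lemma qBinom_zero_right (N : ℕ) : qBinom q N 0 = 1 := by
  simp [qBinom, hpoch N]

lemma qBinom_self (N : ℕ) : qBinom q N N = 1 := by
  simp [qBinom, hpoch N]

lemma qBinom_succ_succ (N m : ℕ) :
    qBinom q (N + 1) (m + 1) = qBinom q N (m + 1) + q ^ (N - m) * qBinom q N m := by
  obtain h | rfl | h := lt_trichotomy N m
  · simp [qBinom_of_lt q h, qBinom_of_lt q (Nat.lt_succ_of_lt h),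
      qBinom_of_lt q (Nat.succ_lt_succ h)]
  · simp [qBinom_self hpoch, qBinom_of_lt q N.lt_succ_self]
  obtain ⟨k, rfl⟩ := Nat.exists_eq_add_of_lt h
  simp only [qBinom, if_pos (by omega : m + 1 ≤ m + k + 1 + 1),
    if_pos (by omega : m + 1 ≤ m + k + 1), if_pos (by omega : m ≤ m + k + 1),
    show m + k + 1 + 1 - (m + 1) = k + 1 by omega,
    show m + k + 1 - (m + 1) = k by omega, show m + k + 1 - m = k + 1 by omega,
    qPoch_succ]
  have := hpoch (m + k + 1)
  have := hpoch m
  have := hpoch k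
  have := one_sub_pow_succ_ne_zero hpoch m
  have := one_sub_pow_succ_ne_zero hpoch k
  field_simp
  ring

lemma pow_mul_qBinom_succ_succ (a N m : ℕ) :
    q ^ ((m + 1) ^ 2 + a * (m + 1)) * qBinom q (N + 1) (m + 1) =
      q ^ ((m + 1) ^ 2 + a * (m + 1)) * qBinom q N (m + 1) +
        q ^ (N + a + 1) * (q ^ (m ^ 2 + (a + 1) * m) * qBinom q N m) := by
  rw [qBinom_succ_succ hpoch, mul_add]
  rcases lt_or_ge N m with h | h
  · simp [qBinom_of_lt q h]
  · obtain ⟨k, rfl⟩ := Nat.exists_eq_add_of_le h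
    rw [add_tsub_cancel_left, ← mul_assoc, ← mul_assoc, ← pow_add, ← pow_add]
    ring_nf

lemma sum_qBinom_div_qPoch_add (N a : ℕ) :
    ∑ m ∈ range (N + 1), q ^ (m ^ 2 + a * m) * qBinom q N m / qPoch q (m + a) =
      (qPoch q (N + a))⁻¹ := by
  induction N generalizing a with
  | zero => simp [qBinom_self hpoch]
  | succ N ih =>
    have hzero (n : ℕ) :
        q ^ (0 ^ 2 + a * 0) * qBinom q n 0 / qPoch q (0 + a) = (qPoch q a)⁻¹ := by
      simp [qBinom_zero_right hpoch]
    have hlast :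
        q ^ ((N + 1) ^ 2 + a * (N + 1)) * qBinom q N (N + 1) / qPoch q (N + 1 + a) = 0 := by
      simp [qBinom_of_lt q N.lt_succ_self]
    calc _ = (∑ m ∈ range (N + 1),
            q ^ ((m + 1) ^ 2 + a * (m + 1)) * qBinom q N (m + 1) / qPoch q (m + 1 + a)) +
            (qPoch q a)⁻¹ + q ^ (N + a + 1) * ∑ m ∈ range (N + 1),
              q ^ (m ^ 2 + (a + 1) * m) * qBinom q N m / qPoch q (m + (a + 1)) := by
          rw [sum_range_succ', hzero, add_right_comm, mul_sum, ← sum_add_distrib]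
          congr 1
          refine sum_congr rfl fun m _ => ?_
          rw [pow_mul_qBinom_succ_succ hpoch, add_div, mul_div_assoc (q ^ (N + a + 1)),
            add_assoc m 1 a, add_comm 1 a]
      _ = (qPoch q (N + a))⁻¹ + q ^ (N + a + 1) * (qPoch q (N + a + 1))⁻¹ := by
          rw [← hzero N,
            ← sum_range_succ' (fun m => q ^ (m ^ 2 + a * m) * qBinom q N m / qPoch q (m + a)),
            sum_range_succ, hlast, add_zero, ih, ih, add_assoc]
      _ = (qPoch q (N + 1 + a))⁻¹ := by
          have := hpoch (N + a)
          have := one_sub_pow_succ_ne_zero hpoch (N + a)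
          rw [Nat.add_right_comm N 1 a, qPoch_succ]
          field_simp
          ring

end

section

variable {q : ℂ} (hq : ‖q‖ < 1)
include hq

lemma qPoch_ne_zero (n : ℕ) : qPoch q n ≠ 0 := by
  refine prod_ne_zero_iff.2 fun j _ => sub_ne_zero.2 fun h => ?_
  have := pow_lt_one₀ (norm_nonneg q) hq j.succ_ne_zero
  rw [← norm_pow, ← h, norm_one] at this
  exact lt_irrefl _ this

lemma tendsto_qPoch : Tendsto (qPoch q) atTop (𝓝 (∏' j : ℕ, (1 - q ^ (j + 1)))) :=
  (ModularForm.multipliable_one_sub_pow hq).hasProd.tendsto_prod_nat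

lemma tprod_one_sub_pow_ne_zero : ∏' j : ℕ, (1 - q ^ (j + 1)) ≠ 0 := by
  simpa [sub_eq_add_neg] using tprod_one_add_ne_zero_of_summable (f := fun j : ℕ => -q ^ (j + 1))
    (by simpa [← sub_eq_add_neg] using one_sub_pow_succ_ne_zero (qPoch_ne_zero hq))
    (by simpa using (summable_nat_add_iff 1).2 (summable_geometric_of_lt_one (norm_nonneg q) hq))

lemma tendsto_inv_qPoch : Tendsto (fun n => (qPoch q n)⁻¹) atTop
    (𝓝 (∏' j : ℕ, (1 - q ^ (j + 1)))⁻¹) :=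
  (tendsto_qPoch hq).inv₀ (tprod_one_sub_pow_ne_zero hq)

lemma tsum_qBinom_div_qPoch (N : ℕ) :
    ∑' m, q ^ (m ^ 2) * qBinom q N m / qPoch q m = (qPoch q N)⁻¹ := by
  rw [tsum_eq_sum (s := range (N + 1)) fun m hm => by
    simp [qBinom_of_lt q (by simpa using hm : N < m)]]
  simpa using sum_qBinom_div_qPoch_add (qPoch_ne_zero hq) N 0

lemma tendsto_qBinom (m : ℕ) : Tendsto (qBinom q · m) atTop (𝓝 (qPoch q m)⁻¹) := by
  have hP := tendsto_qPoch hq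
  have hP₀ := tprod_one_sub_pow_ne_zero hq
  have hlim := (hP.div (hP.comp (tendsto_sub_atTop_nat m)) hP₀).mul_const (qPoch q m)⁻¹
  rw [div_self hP₀, one_mul] at hlim
  refine hlim.congr' ?_
  filter_upwards [eventually_ge_atTop m] with N hN
  simp only [qBinom, if_pos hN, Pi.div_apply, Function.comp_apply]
  ring

lemma exists_norm_qPoch_le : ∃ C, ∀ n, ‖qPoch q n‖ ≤ C := by
  obtain ⟨C, hC⟩ := (tendsto_qPoch hq).norm.bddAbove_range
  exact ⟨C, fun n => hC ⟨n, rfl⟩⟩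

lemma exists_norm_inv_qPoch_le : ∃ D, ∀ n, ‖(qPoch q n)⁻¹‖ ≤ D := by
  obtain ⟨D, hD⟩ := (tendsto_inv_qPoch hq).norm.bddAbove_range
  exact ⟨D, fun n => hD ⟨n, rfl⟩⟩

lemma exists_norm_qBinom_le : ∃ B, ∀ N m, ‖qBinom q N m‖ ≤ B := by
  obtain ⟨C, hC⟩ := exists_norm_qPoch_le hq
  obtain ⟨D, hD⟩ := exists_norm_inv_qPoch_le hq
  have hC₀ : 0 ≤ C := (norm_nonneg _).trans (hC 0)
  have hD₀ : 0 ≤ D := (norm_nonneg _).trans (hD 0)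
  refine ⟨C * D * D, fun N m => ?_⟩
  rcases lt_or_ge N m with h | h
  · rw [qBinom_of_lt q h, norm_zero]
    positivity
  · rw [qBinom, if_pos h, div_eq_mul_inv, mul_inv, norm_mul, norm_mul, ← mul_assoc]
    gcongr
    exacts [hC N, hD m, hD (N - m)]

lemma tendsto_inv_qPoch_tsum : Tendsto (fun N => (qPoch q N)⁻¹) atTop
    (𝓝 (∑' m : ℕ, q ^ (m ^ 2) / (qPoch q m) ^ 2)) := by
  obtain ⟨B, hB⟩ := exists_norm_qBinom_le hq
  obtain ⟨D, hD⟩ := exists_norm_inv_qPoch_le hq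
  simp_rw [← tsum_qBinom_div_qPoch hq]
  refine tendsto_tsum_of_dominated_convergence (bound := fun m => ‖q‖ ^ m * (B * D))
    ((summable_geometric_of_lt_one (norm_nonneg q) hq).mul_right _) (fun m => ?_)
    (.of_forall fun N m => ?_)
  · convert ((tendsto_qBinom hq m).const_mul (q ^ (m ^ 2))).div_const (qPoch q m) using 2
    ring
  · have hB₀ : 0 ≤ B := (norm_nonneg _).trans (hB 0 0)
    rw [div_eq_mul_inv, norm_mul, norm_mul, norm_pow, mul_assoc]
    gcongr ?_ * (?_ * ?_)
    · exact pow_le_pow_of_le_one (norm_nonneg q) hq.le (Nat.le_self_pow two_ne_zero m)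
    · exact hB N m
    · exact hD m

end

theorem euler_identity (q : ℂ) (hq : ‖q‖ < 1) :
    ∑' n : ℕ, q ^ (n ^ 2) / (qPoch q n) ^ 2 = (∏' j : ℕ, (1 - q ^ (j + 1)))⁻¹ :=
  tendsto_nhds_unique (tendsto_inv_qPoch_tsum hq) (tendsto_inv_qPoch hq)
end
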